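/- arXiv:2109.04445 — 4 statements merged into one kernel-verified Lean document; each statement's English description precedes it below -/
import Mathlib

section
/- Let G be a finite abelian group, L ∈ ℤ^{k×d} a matrix, and f : G → [0,1]. Then there exists a set A ⊆ G with |A| ≥ E(f)·|G| − 1 and t_L(A) ≤ t_L(f) + |C^#(L) ∩ A^d| / |C(L)|. -/
open Finset

variable {G : Type*} [AddCommGroup G] [Fintype G] [DecidableEq G]

/-- The configuration `C(L)` given by a matrix `L ∈ ℤ^{k×d}`: the kernel in `G^d` of the induced
map `G^d → G^k`, `v ↦ (∑ i, L h i • v i)_h`. -/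
def config {k d : ℕ} (L : Matrix (Fin k) (Fin d) ℤ) : Finset (Fin d → G) :=
  Finset.univ.filter fun v => ∀ h, ∑ i, L h i • v i = 0

/-- The set `C^#(L)` of non-injective instances of the configuration. -/
def nonInj {k d : ℕ} (L : Matrix (Fin k) (Fin d) ℤ) : Finset (Fin d → G) :=
  (config (G := G) L).filter fun v => ∃ i j, i ≠ j ∧ v i = v j

/-- The arithmetic multiplicity `t_L(f)`. -/
noncomputable def tL {k d : ℕ} (L : Matrix (Fin k) (Fin d) ℤ) (f : G → ℝ) : ℝ :=
  (∑ v ∈ config L, ∏ i, f (v i)) / ((config (G := G) L).card : ℝ)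

/-- The average `E(f)` of `f` over `G`. -/
noncomputable def avg (f : G → ℝ) : ℝ := (∑ x, f x) / (Fintype.card G : ℝ)

/-! The sum `∑ j ∈ s, ∏ x ∈ T j, p x` is affine in each single value `p x`. Moving mass `t` from
`b` to `a` therefore changes it by `β t - γ t²` with `γ ≥ 0`, so one of the two extreme moves keeping
`p` in `[0, 1]` does not increase it, while it preserves `∑ x, p x` and turns `p a` or `p b` into `0`
or `1`. Repeating this until at most one value of `p` lies strictly between `0` and `1`, the set
`{x | p x = 1}` works. On the injective instances of `C(L)` the multiplicity is such a sum; the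
non-injective ones are counted separately. -/

section Rounding

variable {α ι : Type*} [DecidableEq α]

def massTransfer (p : α → ℝ) (a b : α) (t : ℝ) : α → ℝ :=
  Function.update (Function.update p a (p a + t)) b (p b - t)

variable {p : α → ℝ} {a b : α}

@[simp]
lemma massTransfer_zero (p : α → ℝ) (a b : α) : massTransfer p a b 0 = p := by
  simp [massTransfer]

lemma massTransfer_apply_left (hab : a ≠ b) (t : ℝ) : massTransfer p a b t a = p a + t := by
  simp [massTransfer, hab]

lemma massTransfer_apply_right (t : ℝ) : massTransfer p a b t b = p b - t := by
  simp [massTransfer]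

lemma massTransfer_apply_of_ne {x : α} (hxa : x ≠ a) (hxb : x ≠ b) (t : ℝ) :
    massTransfer p a b t x = p x := by
  simp [massTransfer, hxa, hxb]

lemma exists_prod_massTransfer_eq (hp : ∀ x, 0 ≤ p x) (hab : a ≠ b) (T : Finset α) :
    ∃ β γ : ℝ, 0 ≤ γ ∧
      ∀ t, ∏ x ∈ T, massTransfer p a b t x = ∏ x ∈ T, p x + β * t - γ * t ^ 2 := by
  suffices h : ∃ β γ : ℝ, 0 ≤ γ ∧ ∀ t, ∏ x ∈ T, massTransfer p a b t x
      = ∏ x ∈ T, massTransfer p a b 0 x + β * t - γ * t ^ 2 by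
    simpa only [massTransfer_zero] using h
  have hP : ∀ S : Finset α, 0 ≤ ∏ x ∈ S, p x := fun S => prod_nonneg fun x _ => hp x
  simp only [massTransfer]
  by_cases hb : b ∈ T <;> by_cases ha : a ∈ T
  · have ha' : a ∈ T \ {b} := by simp [ha, hab]
    simp only [prod_update_of_mem hb, prod_update_of_mem ha']
    exact ⟨(p b - p a) * ∏ x ∈ (T \ {b}) \ {a}, p x, ∏ x ∈ (T \ {b}) \ {a}, p x, hP _,
      fun t => by ring⟩
  · have ha' : a ∉ T \ {b} := by simp [ha]
    simp only [prod_update_of_mem hb, prod_update_of_notMem ha']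
    exact ⟨-∏ x ∈ T \ {b}, p x, 0, le_rfl, fun t => by ring⟩
  · simp only [prod_update_of_notMem hb, prod_update_of_mem ha]
    exact ⟨∏ x ∈ T \ {a}, p x, 0, le_rfl, fun t => by ring⟩
  · simp only [prod_update_of_notMem hb, prod_update_of_notMem ha]
    exact ⟨0, 0, le_rfl, fun t => by ring⟩

lemma exists_sum_prod_massTransfer_eq (hp : ∀ x, 0 ≤ p x) (hab : a ≠ b) (s : Finset ι)
    (T : ι → Finset α) :
    ∃ β γ : ℝ, 0 ≤ γ ∧ ∀ t, ∑ j ∈ s, ∏ x ∈ T j, massTransfer p a b t x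
      = ∑ j ∈ s, ∏ x ∈ T j, p x + β * t - γ * t ^ 2 := by
  choose β γ hγ h using fun j => exists_prod_massTransfer_eq hp hab (T j)
  refine ⟨∑ j ∈ s, β j, ∑ j ∈ s, γ j, sum_nonneg fun j _ => hγ j, fun t => ?_⟩
  simp only [h, sum_sub_distrib, sum_add_distrib, sum_mul]

lemma massTransfer_mem_Icc (hp : ∀ x, p x ∈ Set.Icc 0 1) (hab : a ≠ b) {t : ℝ}
    (ht : t ∈ Set.Icc (max (-p a) (p b - 1)) (min (1 - p a) (p b))) (x : α) :
    massTransfer p a b t x ∈ Set.Icc 0 1 := by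
  obtain ⟨⟨hta, htb⟩, hta', htb'⟩ : (-p a ≤ t ∧ p b - 1 ≤ t) ∧ t ≤ 1 - p a ∧ t ≤ p b := by
    simpa only [Set.mem_Icc, max_le_iff, le_min_iff] using ht
  by_cases hxb : x = b
  · subst hxb
    rw [massTransfer_apply_right]
    constructor <;> linarith
  by_cases hxa : x = a
  · subst hxa
    rw [massTransfer_apply_left hab]
    constructor <;> linarith
  rw [massTransfer_apply_of_ne hxa hxb]
  exact hp x

variable [Fintype α]

lemma sum_massTransfer (hab : a ≠ b) (t : ℝ) : ∑ x, massTransfer p a b t x = ∑ x, p x := by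
  rw [massTransfer, sum_update_of_mem (mem_univ b), sum_update_of_mem (by simp [hab]),
    ← add_sum_erase _ _ (mem_univ b), ← add_sum_erase _ _ (by simp [hab] : a ∈ univ.erase b)]
  simp only [sdiff_singleton_eq_erase]
  ring

noncomputable def fracSupport (p : α → ℝ) : Finset α :=
  univ.filter fun x => p x ∈ Set.Ioo 0 1

lemma fracSupport_massTransfer_ssubset (ha : a ∈ fracSupport p)
    (hb : b ∈ fracSupport p) {t : ℝ}
    (ht : massTransfer p a b t a ∉ Set.Ioo 0 1 ∨ massTransfer p a b t b ∉ Set.Ioo 0 1) :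
    fracSupport (massTransfer p a b t) ⊂ fracSupport p := by
  have hsub : fracSupport (massTransfer p a b t) ⊆ fracSupport p := by
    intro x hx
    by_cases hxa : x = a
    · exact hxa ▸ ha
    by_cases hxb : x = b
    · exact hxb ▸ hb
    simpa [fracSupport, massTransfer_apply_of_ne hxa hxb] using hx
  rcases ht with ht | ht
  · exact (ssubset_iff_of_subset hsub).2 ⟨a, ha, fun h => ht (mem_filter.mp h).2⟩
  · exact (ssubset_iff_of_subset hsub).2 ⟨b, hb, fun h => ht (mem_filter.mp h).2⟩

lemma exists_massTransfer_le (hp : ∀ x, p x ∈ Set.Icc 0 1) (hab : a ≠ b)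
    (ha : a ∈ fracSupport p) (hb : b ∈ fracSupport p) (s : Finset ι) (T : ι → Finset α) :
    ∃ t, (∀ x, massTransfer p a b t x ∈ Set.Icc 0 1) ∧
      fracSupport (massTransfer p a b t) ⊂ fracSupport p ∧
      ∑ j ∈ s, ∏ x ∈ T j, massTransfer p a b t x ≤ ∑ j ∈ s, ∏ x ∈ T j, p x := by
  obtain ⟨β, γ, hγ, hF⟩ := exists_sum_prod_massTransfer_eq (fun x => (hp x).1) hab s T
  have hpa : p a ∈ Set.Ioo 0 1 := (mem_filter.mp ha).2
  have hpb : p b ∈ Set.Ioo 0 1 := (mem_filter.mp hb).2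
  set tlo := max (-p a) (p b - 1)
  set thi := min (1 - p a) (p b)
  have hlo : tlo ≤ 0 := max_le (by linarith [hpa.1]) (by linarith [hpb.2])
  have hhi : 0 ≤ thi := le_min (by linarith [hpa.2]) hpb.1.le
  -- The quadratic term only helps, so it suffices to move in the direction where `β t ≤ 0`.
  obtain ⟨t, ht, hβt⟩ : ∃ t, (t = tlo ∨ t = thi) ∧ β * t ≤ 0 := by
    rcases le_total 0 β with hβ | hβ
    · exact ⟨tlo, Or.inl rfl, mul_nonpos_of_nonneg_of_nonpos hβ hlo⟩
    · exact ⟨thi, Or.inr rfl, mul_nonpos_of_nonpos_of_nonneg hβ hhi⟩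
  refine ⟨t, massTransfer_mem_Icc hp hab ?_, fracSupport_massTransfer_ssubset ha hb ?_, ?_⟩
  · rcases ht with rfl | rfl
    · exact ⟨le_rfl, hlo.trans hhi⟩
    · exact ⟨hlo.trans hhi, le_rfl⟩
  · simp only [massTransfer_apply_left hab, massTransfer_apply_right, Set.mem_Ioo, not_and_or,
      not_lt]
    rcases ht with rfl | rfl
    · rcases (max_choice _ _ : tlo = -p a ∨ tlo = p b - 1) with h | h
      · exact Or.inl (Or.inl (by linarith))
      · exact Or.inr (Or.inr (by linarith))
    · rcases (min_choice _ _ : thi = 1 - p a ∨ thi = p b) with h | h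
      · exact Or.inl (Or.inr (by linarith))
      · exact Or.inr (Or.inl (by linarith))
  · rw [hF]
    nlinarith [sq_nonneg t]

lemma exists_finset_sum_prod_ite_le_of_card_fracSupport_le_one (hp : ∀ x, p x ∈ Set.Icc 0 1)
    (hfrac : (fracSupport p).card ≤ 1) (s : Finset ι) (T : ι → Finset α) :
    ∃ A : Finset α, ∑ x, p x - 1 ≤ A.card ∧
      ∑ j ∈ s, ∏ x ∈ T j, (if x ∈ A then (1 : ℝ) else 0) ≤ ∑ j ∈ s, ∏ x ∈ T j, p x := by
  refine ⟨univ.filter fun x => p x = 1, ?_, ?_⟩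
  · have hle : ∀ x, p x ≤ (if p x = 1 then 1 else 0) + (if p x ∈ Set.Ioo 0 1 then 1 else 0) := by
      intro x
      obtain ⟨h0, h1⟩ := hp x
      split_ifs with h h' h' <;> simp_all [Set.mem_Ioo, lt_iff_le_and_ne, eq_comm]
    have hsum := sum_le_sum fun x (_ : x ∈ univ) => hle x
    rw [sum_add_distrib, sum_boole, sum_boole] at hsum
    have hfrac' : ((fracSupport p).card : ℝ) ≤ 1 := by exact_mod_cast hfrac
    rw [fracSupport] at hfrac'
    linarith
  · refine sum_le_sum fun j _ => prod_le_prod (fun x _ => by positivity) fun x _ => ?_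
    split_ifs with h
    · exact (mem_filter.mp h).2.ge
    · exact (hp x).1

theorem exists_finset_sum_prod_ite_le (s : Finset ι) (T : ι → Finset α) (p : α → ℝ)
    (hp : ∀ x, p x ∈ Set.Icc 0 1) :
    ∃ A : Finset α, ∑ x, p x - 1 ≤ A.card ∧
      ∑ j ∈ s, ∏ x ∈ T j, (if x ∈ A then (1 : ℝ) else 0) ≤ ∑ j ∈ s, ∏ x ∈ T j, p x := by
  induction hn : (fracSupport p).card using Nat.strong_induction_on generalizing p with
  | _ n ih =>
  by_cases hfrac : (fracSupport p).card ≤ 1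
  · exact exists_finset_sum_prod_ite_le_of_card_fracSupport_le_one hp hfrac s T
  obtain ⟨a, ha, b, hb, hab⟩ := one_lt_card.mp (not_le.mp hfrac)
  obtain ⟨t, ht, hsub, hle⟩ := exists_massTransfer_le hp hab ha hb s T
  obtain ⟨A, hcard, hA⟩ := ih _ (hn ▸ card_lt_card hsub) _ ht rfl
  exact ⟨A, sum_massTransfer hab t ▸ hcard, hA.trans hle⟩

end Rounding

lemma exists_finset_sum_prod_comp_le_of_injective {α ι : Type*} [Fintype α] [DecidableEq α]
    [Fintype ι] (S : Finset (ι → α)) (hS : ∀ v ∈ S, Function.Injective v) (p : α → ℝ)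
    (hp : ∀ x, p x ∈ Set.Icc 0 1) :
    ∃ A : Finset α, ∑ x, p x - 1 ≤ A.card ∧
      ∑ v ∈ S, ∏ i, (if v i ∈ A then (1 : ℝ) else 0) ≤ ∑ v ∈ S, ∏ i, p (v i) := by
  have prod_image_eq (g : α → ℝ) {v} (hv : v ∈ S) : ∏ x ∈ univ.image v, g x = ∏ i, g (v i) :=
    prod_image fun i _ j _ hij => hS v hv hij
  obtain ⟨A, hcard, hA⟩ := exists_finset_sum_prod_ite_le S (fun v => univ.image v) p hp
  refine ⟨A, hcard, ?_⟩
  simpa only [sum_congr rfl fun v hv => prod_image_eq _ hv] using hA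

/-- Conversion of maps to sets, part (i): for any `f : G → [0,1]` there is a set `A ⊆ G` with
`|A| ≥ E(f)·|G| − 1` and `t_L(A) ≤ t_L(f) + |C^#(L) ∩ A^d| / |C(L)|`. -/
theorem maps_to_sets_sidorenko {k d : ℕ} (L : Matrix (Fin k) (Fin d) ℤ)
    (f : G → ℝ) (hf : ∀ x, f x ∈ Set.Icc (0 : ℝ) 1) :
    ∃ A : Finset G,
      (A.card : ℝ) ≥ avg f * (Fintype.card G : ℝ) - 1 ∧
      tL L (fun x => if x ∈ A then (1 : ℝ) else 0) ≤
        tL L f +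
          (((nonInj (G := G) L).filter fun v => ∀ i, v i ∈ A).card : ℝ) /
            ((config (G := G) L).card : ℝ) := by
  set S := (config (G := G) L).filter fun v => ¬ ∃ i j, i ≠ j ∧ v i = v j
  have hS : ∀ v ∈ S, Function.Injective v := fun v hv i j hij =>
    by_contra fun hne => (mem_filter.mp hv).2 ⟨i, j, hne, hij⟩
  obtain ⟨A, hcard, hA⟩ := exists_finset_sum_prod_comp_le_of_injective S hS f hf
  refine ⟨A, ?_, ?_⟩
  · rwa [avg, div_mul_cancel₀ _ (Nat.cast_ne_zero.mpr Fintype.card_ne_zero)]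
  have hSf : ∑ v ∈ S, ∏ i, f (v i) ≤ ∑ v ∈ config L, ∏ i, f (v i) :=
    sum_le_sum_of_subset_of_nonneg (filter_subset _ _)
      fun v _ _ => prod_nonneg fun i _ => (hf (v i)).1
  have hN : ∑ v ∈ nonInj L, ∏ i, (if v i ∈ A then (1 : ℝ) else 0)
      = ((nonInj (G := G) L).filter fun v => ∀ i, v i ∈ A).card := by
    simp only [Fintype.prod_boole]
    -- `convert` absorbs the mismatch between two decidability instances of `∀ i, v i ∈ A`.
    convert sum_boole _ _
  rw [tL, tL, ← add_div, ← sum_filter_add_sum_filter_not (config L)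
    (fun v => ∃ i j, i ≠ j ∧ v i = v j)]
  change (∑ v ∈ nonInj L, _ + ∑ v ∈ S, _) / _ ≤ _
  refine div_le_div_of_nonneg_right ?_ (Nat.cast_nonneg _)
  linarith
end

section
/- Let G be a finite abelian group, L ∈ ℤ^{k×d} a matrix, and f : G → [0,1]. Then there exists a set A ⊆ G such that t_L(A) + t_L(G∖A) ≤ t_L(f) + t_L(1−f) + (|C^#(L) ∩ A^d| + |C^#(L) ∩ (G∖A)^d|) / |C(L)|. -/
open Finset

variable {G : Type*} [AddCommGroup G] [Fintype G] [DecidableEq G]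

/-!
Choose `A` at random, putting each `x` in `A` independently with probability `f x`. An injective
solution `v` then lies in `A^d` with probability `∏ i, f (v i)` and in `(Aᶜ)^d` with probability
`∏ i, (1 - f (v i))`, so some `A` has at most `|C(L)| (t_L(f) + t_L(1 - f))` injective solutions
inside `A^d` or `(Aᶜ)^d`; the non-injective ones are added without estimate.
-/

open Function

namespace Finset

variable {α : Type*} [Fintype α] [DecidableEq α]

/-- The probability that the random subset of `α` containing each `x` independently with
probability `p x` is exactly `A`. -/
def bernoulliWeight (p : α → ℝ) (A : Finset α) : ℝ :=
  (∏ x ∈ A, p x) * ∏ x ∈ Aᶜ, (1 - p x)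

lemma bernoulliWeight_nonneg {p : α → ℝ} (hp : ∀ x, p x ∈ Set.Icc (0 : ℝ) 1) (A : Finset α) :
    0 ≤ bernoulliWeight p A :=
  mul_nonneg (prod_nonneg fun x _ => (hp x).1) (prod_nonneg fun x _ => sub_nonneg.2 (hp x).2)

lemma bernoulliWeight_compl (p : α → ℝ) (A : Finset α) :
    bernoulliWeight p Aᶜ = bernoulliWeight (fun x => 1 - p x) A := by
  simp only [bernoulliWeight, compl_compl, sub_sub_cancel, mul_comm]

lemma sum_bernoulliWeight_of_subset (p : α → ℝ) (S : Finset α) :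
    ∑ A with S ⊆ A, bernoulliWeight p A = ∏ x ∈ S, p x := by
  -- Expand `∏ x, (p x + q x)` where `q` vanishes on `S`: only the sets `A ⊇ S` survive.
  set q : α → ℝ := fun x => if x ∈ S then 0 else 1 - p x
  have hq (A : Finset α) :
      ∏ x ∈ Aᶜ, q x = if S ⊆ A then ∏ x ∈ Aᶜ, (1 - p x) else 0 := by
    simp only [q, ← ite_not (_ ∈ S), prod_ite_zero, mem_compl, not_imp_not, subset_iff]
  calc ∑ A with S ⊆ A, bernoulliWeight p A
      = ∏ x, (p x + q x) := by
        simp only [Fintype.prod_add, hq, mul_ite, mul_zero, sum_filter, bernoulliWeight]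
    _ = ∏ x ∈ S, p x := by
        rw [← Fintype.prod_ite_mem S p]
        exact prod_congr rfl fun x _ => by by_cases hx : x ∈ S <;> simp [q, hx]

lemma sum_bernoulliWeight (p : α → ℝ) : ∑ A, bernoulliWeight p A = 1 := by
  simpa using sum_bernoulliWeight_of_subset p ∅

lemma sum_bernoulliWeight_of_subset_compl (p : α → ℝ) (S : Finset α) :
    ∑ A with S ⊆ Aᶜ, bernoulliWeight p A = ∏ x ∈ S, (1 - p x) := by
  rw [← sum_bernoulliWeight_of_subset, sum_filter, sum_filter]
  exact Fintype.sum_equiv (compl_involutive.toPerm _) _ _ fun A => by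
    simp [bernoulliWeight_compl]

lemma exists_le_sum_bernoulliWeight_mul {p : α → ℝ} (hp : ∀ x, p x ∈ Set.Icc (0 : ℝ) 1)
    (Φ : Finset α → ℝ) : ∃ A, Φ A ≤ ∑ B, bernoulliWeight p B * Φ B := by
  have hw₁ := sum_bernoulliWeight p
  obtain ⟨A, -, hA⟩ := exists_mem_eq_inf' univ_nonempty Φ
  refine ⟨A, hA ▸ (inf_le_centerMass (fun B _ => bernoulliWeight_nonneg hp B)
    (hw₁ ▸ one_pos)).trans_eq ?_⟩
  simp [centerMass, hw₁]

variable {n : ℕ}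

lemma sum_bernoulliWeight_of_forall_mem (p : α → ℝ) {v : Fin n → α} (hv : Injective v) :
    ∑ A with ∀ i, v i ∈ A, bernoulliWeight p A = ∏ i, p (v i) := by
  simpa [image_subset_iff, prod_image hv.injOn] using sum_bernoulliWeight_of_subset p (univ.image v)

lemma sum_bernoulliWeight_of_forall_mem_compl (p : α → ℝ) {v : Fin n → α} (hv : Injective v) :
    ∑ A with ∀ i, v i ∈ Aᶜ, bernoulliWeight p A = ∏ i, (1 - p (v i)) := by
  simpa [image_subset_iff, prod_image hv.injOn] using
    sum_bernoulliWeight_of_subset_compl p (univ.image v)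

lemma exists_card_forall_mem_add_card_forall_mem_compl_le {p : α → ℝ}
    (hp : ∀ x, p x ∈ Set.Icc (0 : ℝ) 1) (V : Finset (Fin n → α)) (hV : ∀ v ∈ V, Injective v) :
    ∃ A : Finset α, (#{v ∈ V | ∀ i, v i ∈ A} : ℝ) + #{v ∈ V | ∀ i, v i ∈ Aᶜ} ≤
      ∑ v ∈ V, (∏ i, p (v i) + ∏ i, (1 - p (v i))) := by
  obtain ⟨A, hA⟩ := exists_le_sum_bernoulliWeight_mul hp fun A =>
    (#{v ∈ V | ∀ i, v i ∈ A} : ℝ) + #{v ∈ V | ∀ i, v i ∈ Aᶜ}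
  refine ⟨A, hA.trans_eq ?_⟩
  calc ∑ B, bernoulliWeight p B *
        ((#{v ∈ V | ∀ i, v i ∈ B} : ℝ) + #{v ∈ V | ∀ i, v i ∈ Bᶜ})
      = ∑ v ∈ V, (∑ B with ∀ i, v i ∈ B, bernoulliWeight p B +
          ∑ B with ∀ i, v i ∈ Bᶜ, bernoulliWeight p B) := by
        simp only [natCast_card_filter, mul_add, mul_sum, mul_ite, mul_one, mul_zero,
          sum_add_distrib, sum_filter]
        rw [sum_comm, sum_comm (s := univ)]
    _ = ∑ v ∈ V, (∏ i, p (v i) + ∏ i, (1 - p (v i))) := sum_congr rfl fun v hv => by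
        rw [sum_bernoulliWeight_of_forall_mem p (hV v hv),
          sum_bernoulliWeight_of_forall_mem_compl p (hV v hv)]

end Finset

section Configurations

variable {k d : ℕ} (L : Matrix (Fin k) (Fin d) ℤ)

lemma tL_indicator (A : Finset G) :
    tL L (fun x => if x ∈ A then (1 : ℝ) else 0) =
      (#{v ∈ config L | ∀ i, v i ∈ A} : ℝ) / #(config (G := G) L) := by
  simp only [tL, Fintype.prod_boole, natCast_card_filter]
  -- `Fintype.prod_boole` produces a different `Decidable` instance for `∀ i, v i ∈ A`
  congr!

lemma nonInj_eq_filter_not_injective :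
    nonInj L = {v ∈ config (G := G) L | ¬Injective v} := by
  ext v
  simp only [nonInj, mem_filter, not_injective_iff]
  grind

lemma card_config_forall_mem (A : Finset G) :
    #{v ∈ config L | ∀ i, v i ∈ A} =
      #{v ∈ nonInj L | ∀ i, v i ∈ A} + #{v ∈ {v ∈ config L | Injective v} | ∀ i, v i ∈ A} := by
  rw [nonInj_eq_filter_not_injective, filter_filter, filter_filter, add_comm,
    ← card_filter_add_card_filter_not (s := {v ∈ config L | ∀ i, v i ∈ A}) Injective,
    filter_filter, filter_filter]
  simp only [and_comm]

end Configurations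

/-- Conversion of maps to sets, part (ii): for any `f : G → [0,1]` there is a set `A ⊆ G` with
`t_L(A) + t_L(Aᶜ) ≤ t_L(f) + t_L(1−f) + (|C^#(L) ∩ A^d| + |C^#(L) ∩ (Aᶜ)^d|) / |C(L)|`. -/
theorem maps_to_sets_common {k d : ℕ} (L : Matrix (Fin k) (Fin d) ℤ)
    (f : G → ℝ) (hf : ∀ x, f x ∈ Set.Icc (0 : ℝ) 1) :
    ∃ A : Finset G,
      tL L (fun x => if x ∈ A then (1 : ℝ) else 0) +
          tL L (fun x => if x ∈ Aᶜ then (1 : ℝ) else 0) ≤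
        tL L f + tL L (fun x => 1 - f x) +
          ((((nonInj (G := G) L).filter fun v => ∀ i, v i ∈ A).card : ℝ) +
              (((nonInj (G := G) L).filter fun v => ∀ i, v i ∈ Aᶜ).card : ℝ)) /
            ((config (G := G) L).card : ℝ) := by
  obtain ⟨A, hA⟩ := exists_card_forall_mem_add_card_forall_mem_compl_le hf
    {v ∈ config (G := G) L | Injective v} fun v hv => (mem_filter.1 hv).2
  have hV : ∑ v ∈ config L with Injective v, (∏ i, f (v i) + ∏ i, (1 - f (v i))) ≤
      ∑ v ∈ config L, (∏ i, f (v i) + ∏ i, (1 - f (v i))) :=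
    sum_le_sum_of_subset_of_nonneg (filter_subset _ _) fun v _ _ =>
      add_nonneg (prod_nonneg fun i _ => (hf _).1) (prod_nonneg fun i _ => sub_nonneg.2 (hf _).2)
  refine ⟨A, ?_⟩
  rw [tL_indicator, tL_indicator, card_config_forall_mem, card_config_forall_mem, tL, tL,
    ← add_div, ← add_div, ← add_div, ← sum_add_distrib]
  refine div_le_div_of_nonneg_right ?_ (Nat.cast_nonneg _)
  push_cast
  linarith
end

section
/- Let G be a finite abelian group, k ≤ d, and let L ∈ ℤ^{k×d} have full rank in G, i.e. the induced map G^d → G^k is surjective. If L admits a canceling partition in G, then L is fully Sidorenko in G; that is, for every f : G → [0,1] one has t_L(f) ≥ (E(f))^d. -/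
/-!
Pair each index `i` with `σ i`, where `σ` is the involution of the canceling partition, and let
`a, b : S → G` be the restrictions of `v` to the smaller elements `S` of the pairs and to their
partners. Cancellation turns `∑ i, L h i • v i` into `ψ a - ψ b`, with `ψ` given by the columns
of `L` in `S`, so `∑_{v ∈ C(L)} ∏ f (v i) = ∑_w M(w)²`, where `M(w)` is the mass of
`a ↦ ∏ f (a i)` on the fiber `ψ⁻¹(w)`. Cauchy–Schwarz over the `|G|^k` fibers bounds this
below by `(∑ f)^d / |G|^k`, and full rank makes all fibers of `G^d → G^k` equal, so
`|C(L)| = |G|^d / |G|^k`.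
-/

open Finset

variable {G : Type*} [AddCommGroup G] [Fintype G] [DecidableEq G]

/-- `L ∈ ℤ^{k×d}` admits a canceling partition in `G`: a partition of the index set into
(distinct) pairs, encoded by a fixed-point-free involution `σ`, such that for each pair
`{i, σ i}` and each row `h`, the pair of coefficients `(L h i, L h (σ i))` is canceling in `G`,
i.e. their sum acts trivially on `G`. -/
def HasCancelingPartition (G : Type*) [AddCommGroup G] {k d : ℕ}
    (L : Matrix (Fin k) (Fin d) ℤ) : Prop :=
  ∃ σ : Equiv.Perm (Fin d), (∀ i, σ i ≠ i) ∧ (∀ i, σ (σ i) = i) ∧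
    ∀ i, ∀ h, ∀ x : G, (L h i + L h (σ i)) • x = 0

section FiberPairs

variable {A H R : Type*} [Fintype A] [Fintype H] [DecidableEq H]

lemma sum_sq_sum_fiber_eq_sum_fiber_pairs [CommSemiring R] (ψ : A → H) (g : A → R) :
    ∑ w, (∑ a with ψ a = w, g a) ^ 2 = ∑ p : A × A with ψ p.1 = ψ p.2, g p.1 * g p.2 := by
  rw [← Finset.sum_fiberwise _ (fun p : A × A => ψ p.1)]
  refine Finset.sum_congr rfl fun w _ => ?_
  rw [sq, Finset.sum_mul_sum, ← Finset.sum_product']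
  refine Finset.sum_congr ?_ fun _ _ => rfl
  ext ⟨a, b⟩
  simp only [Finset.mem_product, Finset.mem_filter, Finset.mem_univ, true_and]
  constructor
  · rintro ⟨rfl, h⟩; exact ⟨h.symm, rfl⟩
  · rintro ⟨h, rfl⟩; exact ⟨rfl, h.symm⟩

lemma sq_sum_le_card_mul_sum_fiber_pairs [CommSemiring R] [LinearOrder R] [IsStrictOrderedRing R]
    [ExistsAddOfLE R] (ψ : A → H) (g : A → R) :
    (∑ a, g a) ^ 2 ≤ Fintype.card H * ∑ p : A × A with ψ p.1 = ψ p.2, g p.1 * g p.2 := by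
  rw [← sum_sq_sum_fiber_eq_sum_fiber_pairs, ← Finset.sum_fiberwise _ ψ]
  exact sq_sum_le_card_mul_sum_sq

end FiberPairs

namespace Equiv.Perm

variable {ι : Type*} [Fintype ι] [LinearOrder ι] (σ : Equiv.Perm ι)

def lowerHalf : Finset ι := {i | i < σ i}

variable {σ}

lemma mem_lowerHalf_iff_apply_notMem (hσ : ∀ i, σ i ≠ i) (hinv : Function.Involutive σ)
    (i : ι) :
    i ∈ σ.lowerHalf ↔ σ i ∉ σ.lowerHalf := by
  simp only [lowerHalf, Finset.mem_filter, Finset.mem_univ, true_and, hinv i, not_lt]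
  exact ⟨le_of_lt, fun h => lt_of_le_of_ne h (hσ i).symm⟩

def sumLowerHalfEquiv (hσ : ∀ i, σ i ≠ i) (hinv : Function.Involutive σ) :
    σ.lowerHalf ⊕ σ.lowerHalf ≃ ι :=
  (Equiv.sumCongr (Equiv.refl _)
    (σ.subtypeEquiv (mem_lowerHalf_iff_apply_notMem hσ hinv))).trans (Equiv.sumCompl _)

@[to_additive]
lemma prod_eq_prod_lowerHalf {M : Type*} [CommMonoid M] (hσ : ∀ i, σ i ≠ i)
    (hinv : Function.Involutive σ) (g : ι → M) :
    ∏ i, g i = ∏ i : σ.lowerHalf, g i * g (σ i) := by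
  rw [← (sumLowerHalfEquiv hσ hinv).prod_comp, Fintype.prod_sum_type, Finset.prod_mul_distrib]
  rfl

lemma card_eq_two_mul_card_lowerHalf (hσ : ∀ i, σ i ≠ i) (hinv : Function.Involutive σ) :
    Fintype.card ι = 2 * σ.lowerHalf.card := by
  rw [← Fintype.card_congr (sumLowerHalfEquiv hσ hinv), Fintype.card_sum, Fintype.card_coe]
  ring

def arrowLowerHalfEquiv (α : Type*) (hσ : ∀ i, σ i ≠ i) (hinv : Function.Involutive σ) :
    (ι → α) ≃ (σ.lowerHalf → α) × (σ.lowerHalf → α) :=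
  ((sumLowerHalfEquiv hσ hinv).arrowCongr (Equiv.refl α)).symm.trans
    (Equiv.sumArrowEquivProdArrow _ _ _)

lemma arrowLowerHalfEquiv_apply {α : Type*} (hσ : ∀ i, σ i ≠ i) (hinv : Function.Involutive σ)
    (v : ι → α) :
    arrowLowerHalfEquiv α hσ hinv v =
      (fun i : σ.lowerHalf => v i, fun i : σ.lowerHalf => v (σ i)) :=
  rfl

end Equiv.Perm

namespace Matrix

variable {m n : Type*} [Fintype n]

def inducedHom (M : Type*) [AddCommGroup M] (L : Matrix m n ℤ) : (n → M) →+ (m → M) where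
  toFun v h := ∑ i, L h i • v i
  map_zero' := by ext; simp
  map_add' u v := by ext; simp [smul_add, Finset.sum_add_distrib]

@[simp]
lemma inducedHom_apply {M : Type*} [AddCommGroup M] (L : Matrix m n ℤ) (v : n → M) (h : m) :
    L.inducedHom M v h = ∑ i, L h i • v i :=
  rfl

lemma inducedHom_eq_sub_of_canceling [LinearOrder n] {M : Type*} [AddCommGroup M]
    (L : Matrix m n ℤ) {σ : Equiv.Perm n} (hσ : ∀ i, σ i ≠ i) (hinv : Function.Involutive σ)
    (hcan : ∀ i h, ∀ x : M, (L h i + L h (σ i)) • x = 0) (v : n → M) :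
    L.inducedHom M v =
      (L.submatrix id (↑)).inducedHom M (fun i : σ.lowerHalf => v i) -
        (L.submatrix id (↑)).inducedHom M (fun i : σ.lowerHalf => v (σ i)) := by
  ext h
  have hneg : ∀ i (x : M), L h (σ i) • x = -(L h i • x) := fun i x =>
    eq_neg_of_add_eq_zero_right (by rw [← add_smul]; exact hcan i h x)
  simp only [inducedHom_apply, Pi.sub_apply, submatrix_apply, id,
    σ.sum_eq_sum_lowerHalf hσ hinv, hneg, ← sub_eq_add_neg, Finset.sum_sub_distrib]

end Matrix

section Configuration

variable {k d : ℕ} {L : Matrix (Fin k) (Fin d) ℤ}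

lemma mem_config_iff {v : Fin d → G} : v ∈ config L ↔ L.inducedHom G v = 0 := by
  simp [config, funext_iff]

lemma card_pow_mul_card_config (hrank : Function.Surjective (L.inducedHom G)) :
    Fintype.card G ^ k * #(config (G := G) L) = Fintype.card G ^ d := by
  have hker : Nat.card (L.inducedHom G).ker = #(config (G := G) L) := by
    rw [← Nat.card_eq_finsetCard]
    exact Nat.card_congr (Equiv.subtypeEquivRight fun v => mem_config_iff.symm)
  have := (L.inducedHom G).ker.card_mul_index
  rw [AddSubgroup.index_ker, AddMonoidHom.range_eq_top.2 hrank, AddSubgroup.card_top, hker]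
    at this
  simpa [mul_comm] using this

lemma HasCancelingPartition.sum_pow_le_card_pow_mul_sum_config
    (hpart : HasCancelingPartition G L) (f : G → ℝ) :
    (∑ x, f x) ^ d ≤ Fintype.card G ^ k * ∑ v ∈ config L, ∏ i, f (v i) := by
  obtain ⟨σ, hσ, hinv, hcan⟩ := hpart
  replace hinv : Function.Involutive σ := hinv
  set ψ := (L.submatrix id ((↑) : σ.lowerHalf → Fin d)).inducedHom G
  set g : (σ.lowerHalf → G) → ℝ := fun a => ∏ i, f (a i)
  have hsum : ∑ a, g a = (∑ x, f x) ^ #σ.lowerHalf := by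
    rw [← Fintype.prod_sum, Finset.prod_const, Finset.card_univ, Fintype.card_coe]
  have hconfig : ∑ v ∈ config L, ∏ i, f (v i) =
      ∑ p : (σ.lowerHalf → G) × (σ.lowerHalf → G) with ψ p.1 = ψ p.2, g p.1 * g p.2 := by
    rw [← Fintype.sum_ite_mem, Finset.sum_filter]
    refine Fintype.sum_equiv (σ.arrowLowerHalfEquiv G hσ hinv) _ _ fun v => ?_
    rw [σ.arrowLowerHalfEquiv_apply]
    refine if_congr ?_ (by rw [σ.prod_eq_prod_lowerHalf hσ hinv, Finset.prod_mul_distrib]) rfl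
    rw [mem_config_iff, L.inducedHom_eq_sub_of_canceling hσ hinv hcan, sub_eq_zero]
  calc (∑ x, f x) ^ d = (∑ a, g a) ^ 2 := by
        rw [hsum, ← pow_mul, mul_comm, ← σ.card_eq_two_mul_card_lowerHalf hσ hinv,
          Fintype.card_fin]
    _ ≤ Fintype.card (Fin k → G) *
          ∑ p : (σ.lowerHalf → G) × (σ.lowerHalf → G) with ψ p.1 = ψ p.2, g p.1 * g p.2 :=
        sq_sum_le_card_mul_sum_fiber_pairs ψ g
    _ = Fintype.card G ^ k * ∑ v ∈ config L, ∏ i, f (v i) := by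
        rw [hconfig, Fintype.card_fun, Fintype.card_fin, Nat.cast_pow]

end Configuration

theorem canceling_partition_fully_sidorenko_general {k d : ℕ}
    (L : Matrix (Fin k) (Fin d) ℤ)
    (hrank : Function.Surjective (fun (v : Fin d → G) (h : Fin k) => ∑ i, L h i • v i))
    (hpart : HasCancelingPartition G L)
    (f : G → ℝ) :
    tL L f ≥ (avg f) ^ d := by
  have hcard : (Fintype.card G : ℝ) ^ k * #(config (G := G) L) = (Fintype.card G : ℝ) ^ d := by
    exact_mod_cast card_pow_mul_card_config (L := L) hrank
  have hconfig : (0 : ℝ) < #(config (G := G) L) :=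
    Nat.cast_pos.2 (Finset.card_pos.2 ⟨0, mem_config_iff.2 (map_zero _)⟩)
  rw [tL, avg, div_pow, ge_iff_le, div_le_div_iff₀ (by positivity) hconfig, ← hcard]
  exact (mul_le_mul_of_nonneg_right (hpart.sum_pow_le_card_pow_mul_sum_config f)
    hconfig.le).trans_eq (by ring)

/-- If `k ≤ d`, `L ∈ ℤ^{k×d}` has full rank in `G` (the induced map `G^d → G^k` is surjective)
and `L` admits a canceling partition in `G`, then `L` is fully Sidorenko in `G`. -/
theorem canceling_partition_fully_sidorenko {k d : ℕ} (hk : k ≤ d)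
    (L : Matrix (Fin k) (Fin d) ℤ)
    (hrank : Function.Surjective (fun (v : Fin d → G) (h : Fin k) => ∑ i, L h i • v i))
    (hpart : HasCancelingPartition G L)
    (f : G → ℝ) (hf : ∀ x, f x ∈ Set.Icc (0 : ℝ) 1) :
    tL L f ≥ (avg f) ^ d :=
  canceling_partition_fully_sidorenko_general L hrank hpart f
end

section
/- Let G be a finite abelian group, L ∈ ℤ^{k×d} a matrix, and f : G → [0,1]. Then there exists a function g : G → [0,1] with E(g) = E(f), such that the set {x ∈ G : g(x) ∉ {0,1}} has at most one element, and Σ_{v∈C^inj(L)} Π_{i=1}^d g(v_i) ≤ Σ_{v∈C^inj(L)} Π_{i=1}^d f(v_i). -/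
/-!
If two points `x ≠ y` both carry values of `f` strictly between `0` and `1`, move mass `t` from
`y` to `x`. For an injective instance `v` the product `∏ i, f (v i)` contains `f x` and `f y` at
most once each, so along this move it is a product of at most two affine functions of `t` whose
slopes have opposite signs, hence concave in `t`; so is the sum over all instances. The values stay
in `[0,1]` for `t` in an interval containing `0`, and a concave function attains its minimum on an
interval at an endpoint, where `f x` or `f y` has become `0` or `1`. The average is unchanged and
there is one fractional point less, so iterating leaves at most one.
-/

open Finset

variable {G : Type*} [AddCommGroup G] [Fintype G] [DecidableEq G]

lemma concaveOn_affine_mul_affine {a b p q : ℝ} (hpq : p * q ≤ 0) :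
    ConcaveOn ℝ Set.univ fun t => (a + p * t) * (b + q * t) := by
  refine ⟨convex_univ, fun u _ v _ μ ν hμ hν hμν => ?_⟩
  obtain rfl : ν = 1 - μ := by linarith
  have defect : (a + p * (μ * u + (1 - μ) * v)) * (b + q * (μ * u + (1 - μ) * v)) -
      (μ * ((a + p * u) * (b + q * u)) + (1 - μ) * ((a + p * v) * (b + q * v))) =
      -(p * q) * (μ * (1 - μ) * (u - v) ^ 2) := by ring
  have : 0 ≤ -(p * q) * (μ * (1 - μ) * (u - v) ^ 2) :=
    mul_nonneg (neg_nonneg.2 hpq) (mul_nonneg (mul_nonneg hμ hν) (sq_nonneg _))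
  simp only [smul_eq_mul]
  linarith

section Smoothing

variable {α β : Type*}

def fractionalPoints (f : α → ℝ) : Set α := {z | f z ≠ 0 ∧ f z ≠ 1}

section Transfer

variable [DecidableEq α]

def transfer (f : α → ℝ) (x y : α) (t : ℝ) : α → ℝ :=
  Function.update (Function.update f x (f x + t)) y (f y - t)

variable {f : α → ℝ} {x y : α}

@[simp] lemma transfer_zero : transfer f x y 0 = f := by
  ext z; by_cases hz : z = y <;> simp [transfer, hz]

lemma transfer_apply_left (hxy : x ≠ y) (t : ℝ) : transfer f x y t x = f x + t := by
  simp [transfer, hxy]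

lemma transfer_apply_right (t : ℝ) : transfer f x y t y = f y - t := by
  simp [transfer]

lemma transfer_apply_of_ne {z : α} (hzx : z ≠ x) (hzy : z ≠ y) (t : ℝ) :
    transfer f x y t z = f z := by
  simp [transfer, hzx, hzy]

lemma sum_transfer [Fintype α] (hxy : x ≠ y) (t : ℝ) : ∑ z, transfer f x y t z = ∑ z, f z := by
  have hx : x ∈ (univ : Finset α).erase y := by simpa using hxy
  simp only [transfer, sum_update_of_mem (mem_univ y), sdiff_singleton_eq_erase,
    sum_update_of_mem hx, ← add_sum_erase _ f (mem_univ y), ← add_sum_erase _ f hx]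
  ring

lemma prod_transfer (hxy : x ≠ y) (s : Finset α) (t : ℝ) :
    ∏ z ∈ s, transfer f x y t z =
      (if x ∈ s then f x + t else 1) * (if y ∈ s then f y - t else 1) * ∏ z ∈ s \ {x, y}, f z := by
  by_cases hy : y ∈ s <;> by_cases hx : x ∈ s
  all_goals
    simp only [transfer, hx, hy, hxy, prod_update_of_mem, prod_update_of_notMem, mem_erase, ne_eq,
      not_false_eq_true, and_self, and_false, ↓reduceIte, one_mul, mul_one, sdiff_insert,
      sdiff_singleton_eq_erase, erase_eq_of_notMem]
  ring

lemma concaveOn_prod_transfer (hf : ∀ z, 0 ≤ f z) (hxy : x ≠ y) (s : Finset α) :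
    ConcaveOn ℝ Set.univ fun t => ∏ z ∈ s, transfer f x y t z := by
  simp only [prod_transfer hxy]
  have hr : 0 ≤ ∏ z ∈ s \ {x, y}, f z := prod_nonneg fun z _ => hf z
  have key (a b p q : ℝ) (hpq : p * q ≤ 0) :
      ConcaveOn ℝ Set.univ fun t => (a + p * t) * (b + q * t) * ∏ z ∈ s \ {x, y}, f z :=
    ((concaveOn_affine_mul_affine (a := a) (b := b) hpq).smul hr).congr fun t _ => by
      simp only [smul_eq_mul]; ring
  split_ifs
  · simpa [sub_eq_add_neg] using key (f x) (f y) 1 (-1) (by norm_num)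
  · simpa using key (f x) 1 1 0 (by norm_num)
  · simpa [sub_eq_add_neg] using key 1 (f y) 0 (-1) (by norm_num)
  · simpa using key 1 1 0 0 (by norm_num)

lemma concaveOn_sum_prod_transfer (hf : ∀ z, 0 ≤ f z) (hxy : x ≠ y) (S : Finset β)
    (A : β → Finset α) :
    ConcaveOn ℝ Set.univ fun t => ∑ v ∈ S, ∏ z ∈ A v, transfer f x y t z := by
  have := sum_induction (s := S) (fun v t => ∏ z ∈ A v, transfer f x y t z) (ConcaveOn ℝ Set.univ)
    (fun _ _ => ConcaveOn.add) (concaveOn_const 0 convex_univ)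
    (fun v _ => concaveOn_prod_transfer hf hxy (A v))
  simpa only [sum_fn] using this

lemma fractionalPoints_transfer_subset (hx : x ∈ fractionalPoints f) (hy : y ∈ fractionalPoints f)
    (t : ℝ) : fractionalPoints (transfer f x y t) ⊆ fractionalPoints f := by
  intro z hz
  by_cases hzx : z = x
  · exact hzx ▸ hx
  by_cases hzy : z = y
  · exact hzy ▸ hy
  simpa [fractionalPoints, transfer_apply_of_ne hzx hzy] using hz

end Transfer

variable [Fintype α] {f : α → ℝ}

lemma exists_fractionalPoints_ssubset {x y : α} (S : Finset β) (A : β → Finset α)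
    (hf : ∀ z, f z ∈ Set.Icc (0 : ℝ) 1) (hxy : x ≠ y) (hx : x ∈ fractionalPoints f)
    (hy : y ∈ fractionalPoints f) :
    ∃ g : α → ℝ, (∀ z, g z ∈ Set.Icc (0 : ℝ) 1) ∧ ∑ z, g z = ∑ z, f z ∧
      fractionalPoints g ⊂ fractionalPoints f ∧
      ∑ v ∈ S, ∏ z ∈ A v, g z ≤ ∑ v ∈ S, ∏ z ∈ A v, f z := by
  classical
  set a := max (-f x) (f y - 1) with ha
  set b := min (1 - f x) (f y) with hb
  have hmem : ∀ t ∈ Set.Icc a b, ∀ z, transfer f x y t z ∈ Set.Icc (0 : ℝ) 1 := by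
    rintro t ⟨hat, htb⟩ z
    rw [max_le_iff] at hat
    rw [le_min_iff] at htb
    by_cases hzx : z = x
    · rw [hzx, transfer_apply_left hxy]; constructor <;> linarith
    by_cases hzy : z = y
    · rw [hzy, transfer_apply_right]; constructor <;> linarith
    rw [transfer_apply_of_ne hzx hzy]; exact hf z
  have h0 : (0 : ℝ) ∈ Set.Icc a b :=
    ⟨max_le (by linarith [(hf x).1]) (by linarith [(hf y).2]),
      le_min (by linarith [(hf x).2]) (hf y).1⟩
  have hend : ∀ t ∈ ({a, b} : Set ℝ),
      x ∉ fractionalPoints (transfer f x y t) ∨ y ∉ fractionalPoints (transfer f x y t) := by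
    rintro t (rfl | rfl)
    · rcases max_choice (-f x) (f y - 1) with h | h
      · left; simp [fractionalPoints, transfer_apply_left hxy, ha, h]
      · right; simp [fractionalPoints, transfer_apply_right, ha, h]
    · rcases min_choice (1 - f x) (f y) with h | h
      · left; simp [fractionalPoints, transfer_apply_left hxy, hb, h]
      · right; simp [fractionalPoints, transfer_apply_right, hb, h]
  have hmin := (concaveOn_sum_prod_transfer (fun z => (hf z).1) hxy S A).min_le_of_mem_Icc
    trivial trivial h0
  obtain ⟨t, ht, hle⟩ : ∃ t ∈ ({a, b} : Set ℝ),
      ∑ v ∈ S, ∏ z ∈ A v, transfer f x y t z ≤ ∑ v ∈ S, ∏ z ∈ A v, f z := by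
    rcases min_le_iff.1 hmin with h | h
    exacts [⟨a, by simp, by simpa using h⟩, ⟨b, by simp, by simpa using h⟩]
  refine ⟨transfer f x y t, hmem t ?_, sum_transfer hxy t,
    (Set.ssubset_iff_of_subset (fractionalPoints_transfer_subset hx hy t)).2 ?_, hle⟩
  · rcases ht with rfl | rfl
    exacts [⟨le_rfl, h0.1.trans h0.2⟩, ⟨h0.1.trans h0.2, le_rfl⟩]
  · rcases hend t ht with h | h
    exacts [⟨x, hx, h⟩, ⟨y, hy, h⟩]

theorem exists_almost_indicator_le (S : Finset β) (A : β → Finset α)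
    (hf : ∀ z, f z ∈ Set.Icc (0 : ℝ) 1) :
    ∃ g : α → ℝ, (∀ z, g z ∈ Set.Icc (0 : ℝ) 1) ∧ ∑ z, g z = ∑ z, f z ∧
      (fractionalPoints g).Subsingleton ∧
      ∑ v ∈ S, ∏ z ∈ A v, g z ≤ ∑ v ∈ S, ∏ z ∈ A v, f z := by
  induction hn : (fractionalPoints f).ncard using Nat.strong_induction_on generalizing f with
  | _ n ih =>
  by_cases hsub : (fractionalPoints f).Subsingleton
  · exact ⟨f, hf, rfl, hsub, le_rfl⟩
  obtain ⟨x, hx, y, hy, hxy⟩ := Set.not_subsingleton_iff.1 hsub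
  obtain ⟨g, hg, hsum, hlt, hle⟩ := exists_fractionalPoints_ssubset S A hf hxy hx hy
  obtain ⟨g', hg', hsum', hsub', hle'⟩ := ih _ (hn ▸ Set.ncard_lt_ncard hlt) hg rfl
  exact ⟨g', hg', hsum'.trans hsum, hsub', hle'.trans hle⟩

end Smoothing

lemma injective_of_mem_config_sdiff_nonInj {k d : ℕ} {L : Matrix (Fin k) (Fin d) ℤ}
    {v : Fin d → G} (hv : v ∈ config L \ nonInj L) : Function.Injective v := by
  intro i j hij
  by_contra hne
  exact (mem_sdiff.1 hv).2 (mem_filter.2 ⟨(mem_sdiff.1 hv).1, i, j, hne, hij⟩)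

/-- For any `f : G → [0,1]` there is `g : G → [0,1]` with the same average, taking values in
`{0,1}` at all but at most one point, and with
`∑_{v ∈ C^inj(L)} ∏ i, g(v_i) ≤ ∑_{v ∈ C^inj(L)} ∏ i, f(v_i)`, where
`C^inj(L) = C(L) ∖ C^#(L)` is the set of injective instances. -/
theorem exists_almost_indicator_minimizer {k d : ℕ} (L : Matrix (Fin k) (Fin d) ℤ)
    (f : G → ℝ) (hf : ∀ x, f x ∈ Set.Icc (0 : ℝ) 1) :
    ∃ g : G → ℝ, (∀ x, g x ∈ Set.Icc (0 : ℝ) 1) ∧ avg g = avg f ∧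
      {x : G | g x ≠ 0 ∧ g x ≠ 1}.Subsingleton ∧
      ∑ v ∈ config (G := G) L \ nonInj (G := G) L, ∏ i, g (v i) ≤
        ∑ v ∈ config (G := G) L \ nonInj (G := G) L, ∏ i, f (v i) := by
  obtain ⟨g, hg, hsum, hfrac, hle⟩ :=
    exists_almost_indicator_le (config L \ nonInj L) (fun v => univ.image v) hf
  have prod_eq (h : G → ℝ) : ∀ v ∈ config L \ nonInj L, ∏ i, h (v i) = ∏ z ∈ univ.image v, h z :=
    fun v hv => (prod_image (injective_of_mem_config_sdiff_nonInj hv).injOn).symm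
  refine ⟨g, hg, by rw [avg, avg, hsum], hfrac, ?_⟩
  rwa [sum_congr rfl (prod_eq g), sum_congr rfl (prod_eq f)]
end
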